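/- Let a₁ = (1,0), a₂ = (0,1), a₃ = (−1,0), a₄ = (0,−1) in ℝ², and set ω² = 7/16 + 5/(2√2). Then for each i ∈ {1,2,3,4}: ω²·aᵢ = Σ_{j≠i} (aᵢ − aⱼ)·(‖aᵢ − aⱼ‖^(−3) + 3‖aᵢ − aⱼ‖^(−5)). In other words, the equal-mass square inscribed in the unit circle is a central configuration of the Schwarzschild potential with multiplier ω² = 7/16 + 5/(2√2). -/

import Mathlib

open Finset

/-- The vertices of the square inscribed in the unit circle. -/
noncomputable def a4 : Fin 4 → EuclideanSpace ℝ (Fin 2) :=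
  ![!₂[1, 0], !₂[0, 1], !₂[-1, 0], !₂[0, -1]]

/-!
Seen from a vertex `u`, the other vertices are its two neighbours `±v` (with `v ⟂ u`), at
distance `√2`, and the antipode `-u`, at distance `2`. For any radial force law `f`, the
components along `v` of the two neighbour terms cancel, so the total force is
`(2 f(√2) + 2 f(2)) u`; for `f(r) = r⁻³ + 3 r⁻⁵` this coefficient is `7/16 + 5/(2√2)`.
-/

theorem Fin.sum_univ_sdiff_singleton_four {M : Type*} [AddCommMonoid M] (g : Fin 4 → M)
    (i : Fin 4) : ∑ j ∈ univ \ {i}, g j = g (i + 1) + g (i + 2) + g (i + 3) := by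
  have hcompl : univ \ {i} = {i + 1, i + 2, i + 3} := by fin_cases i <;> decide
  rw [hcompl, sum_insert (by fin_cases i <;> decide), sum_pair (by fin_cases i <;> decide),
    add_assoc]

theorem sum_smul_sub_square_of_orthonormal {E : Type*} [NormedAddCommGroup E]
    [InnerProductSpace ℝ E] (f : ℝ → ℝ) {u v : E} (hu : ‖u‖ = 1) (hv : ‖v‖ = 1)
    (huv : inner ℝ u v = 0) :
    f ‖u - v‖ • (u - v) + f ‖u - -u‖ • (u - -u) + f ‖u - -v‖ • (u - -v) =
      (2 * f √2 + 2 * f 2) • u := by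
  have hside : ∀ w : E, inner ℝ u w = 0 → ‖w‖ = 1 → ‖u - w‖ = √2 := by
    intro w huw hw
    rw [← Real.sqrt_sq (norm_nonneg _), norm_sub_sq_real, huw, hu, hw]
    norm_num
  have hdiag : ‖u - -u‖ = 2 := by
    rw [sub_neg_eq_add, ← two_smul ℝ, norm_smul, hu]; norm_num
  rw [hside v huv hv, hside (-v) (by rw [inner_neg_right, huv, neg_zero]) (by rw [norm_neg, hv]),
    hdiag]
  module

theorem a4_add_two (i : Fin 4) : a4 (i + 2) = -a4 i := by
  fin_cases i <;> ext k <;> fin_cases k <;> simp [a4]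

theorem norm_a4 (i : Fin 4) : ‖a4 i‖ = 1 := by
  fin_cases i <;> simp [a4, EuclideanSpace.norm_eq, Fin.sum_univ_two]

theorem inner_a4_add_one (i : Fin 4) : inner ℝ (a4 i) (a4 (i + 1)) = 0 := by
  fin_cases i <;> simp [a4, PiLp.inner_apply, Fin.sum_univ_two]

theorem schwarzschild_square_multiplier :
    2 * (√2 ^ (-3 : ℤ) + 3 * √2 ^ (-5 : ℤ)) + 2 * (2 ^ (-3 : ℤ) + 3 * 2 ^ (-5 : ℤ)) =
      (7 / 16 + 5 / (2 * √2) : ℝ) := by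
  have h3 : √2 ^ 3 = 2 * √2 := by rw [pow_succ, Real.sq_sqrt zero_le_two]
  have h5 : √2 ^ 5 = 4 * √2 := by
    rw [show 5 = 3 + 2 from rfl, pow_add, h3, Real.sq_sqrt zero_le_two]; ring
  simp only [zpow_neg, zpow_ofNat, h3, h5]
  field_simp
  ring

/-- The equal-mass square inscribed in the unit circle is a central configuration of the
Schwarzschild potential with multiplier `ω² = 7/16 + 5/(2√2)`. -/
theorem square_central_config_schwarzschild :
    ∀ i : Fin 4,
      (7/16 + 5 / (2 * Real.sqrt 2)) • a4 i =
        ∑ j ∈ Finset.univ \ {i},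
          (‖a4 i - a4 j‖ ^ (-3 : ℤ) + 3 * ‖a4 i - a4 j‖ ^ (-5 : ℤ)) • (a4 i - a4 j) := by
  intro i
  have hopposite : a4 (i + 3) = -a4 (i + 1) := by
    rw [← a4_add_two, add_assoc]; rfl
  rw [Fin.sum_univ_sdiff_singleton_four, a4_add_two, hopposite,
    sum_smul_sub_square_of_orthonormal (fun r => r ^ (-3 : ℤ) + 3 * r ^ (-5 : ℤ)) (norm_a4 i)
      (norm_a4 (i + 1)) (inner_a4_add_one i), schwarzschild_square_multiplier]
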